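/- Suppose Δ > 0, let c > 1, set T₀ = c·n·Δ, and let β_t = ln(⌊t/n⌋ + 1)/T₀ for t ≥ 0. Then the nonhomogeneous Markov chain on Aⁿ with transition matrices P^{(t)} = P_{β_t} is weakly ergodic: for all probability distributions μ, ν on Aⁿ and all n1 ≥ 0, lim_{n2→∞} ‖μP^{(n1,n2)} − νP^{(n1,n2)}‖₁ = 0. -/

import Mathlib

open Filter

/-- The Gibbs-sampler (heat bath) transition matrix at inverse temperature `β`
for the energy `E` on the state space `Fin n → A`: a coordinate `i` is chosen
uniformly at random and resampled from the conditional Boltzmann distribution. -/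
noncomputable def gibbs {A : Type*} [Fintype A] [DecidableEq A]
    (n : ℕ) (E : (Fin n → A) → ℝ) (β : ℝ) :
    Matrix (Fin n → A) (Fin n → A) ℝ := fun u v =>
  (∑ i : Fin n,
    if ∀ j, j ≠ i → v j = u j then
      Real.exp (-β * E v) / ∑ b : A, Real.exp (-β * E (Function.update u i b))
    else 0) / n

/-- The maximal change of the energy `E` when a single coordinate is modified. -/
noncomputable def energySpan {A : Type*} [Fintype A] [DecidableEq A]
    (n : ℕ) (E : (Fin n → A) → ℝ) : ℝ :=
  ⨆ q : (Fin n → A) × Fin n × A × A,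
    |E (Function.update q.1 q.2.1 q.2.2.1) - E (Function.update q.1 q.2.1 q.2.2.2)|

/-- The ℓ¹ distance between two vectors on a finite index set. -/
noncomputable def l1 {S : Type*} [Fintype S] (u v : S → ℝ) : ℝ :=
  ∑ k, |u k - v k|

/-- A probability distribution (row vector) on a finite state space. -/
def IsDist {S : Type*} [Fintype S] (μ : S → ℝ) : Prop :=
  (∀ k, 0 ≤ μ k) ∧ ∑ k, μ k = 1

/-- The product `P^{(n1,n2)} = P^{(n1)} P^{(n1+1)} ⋯ P^{(n2−1)}` of the transition
matrices of a nonhomogeneous Markov chain. -/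
noncomputable def Pprod {S : Type*} [Fintype S] [DecidableEq S]
    (P : ℕ → Matrix S S ℝ) (n1 n2 : ℕ) : Matrix S S ℝ :=
  ((List.range (n2 - n1)).map fun t => P (n1 + t)).prod

/-!
Each Gibbs step resamples one coordinate, and moves to any prescribed value of it with probability
at least `exp (-β Δ) / (n |A|)`. During the `k`-th block of `n` steps the temperature is constant,
so the block's transition matrix has all entries at least `ε_k = (exp (-β_k Δ) / (n |A|)) ^ n`, and
by Doeblin's bound it contracts the `ℓ¹` norm of mass-zero vectors such as `μ - ν` by `1 - ε_k`.
Since `n β_k Δ ≤ log (k + 1)` we get `ε_k ≥ (n |A|)⁻ⁿ / (k + 1)`, so `∑ ε_k = ∞` and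
`∏ (1 - ε_k) = 0`.
-/

open Matrix Finset Topology

section Contraction

variable {S : Type*} [Fintype S]

lemma sum_abs_vecMul_le_of_sum_row_le {Q : Matrix S S ℝ} (hQ : ∀ u v, 0 ≤ Q u v) {r : ℝ}
    (hr : ∀ u, ∑ v, Q u v ≤ r) (x : S → ℝ) :
    ∑ v, |(x ᵥ* Q) v| ≤ r * ∑ u, |x u| :=
  calc ∑ v, |(x ᵥ* Q) v| ≤ ∑ v, ∑ u, |x u| * Q u v := by
        gcongr with v
        refine (abs_sum_le_sum_abs _ _).trans_eq (sum_congr rfl fun u _ => ?_)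
        rw [abs_mul, abs_of_nonneg (hQ u v)]
    _ = ∑ u, |x u| * ∑ v, Q u v := by rw [sum_comm]; simp only [mul_sum]
    _ ≤ ∑ u, |x u| * r := by gcongr with u; exact hr u
    _ = r * ∑ u, |x u| := by rw [← sum_mul, mul_comm]

variable [DecidableEq S]

lemma sum_vecMul_of_mem_rowStochastic {P : Matrix S S ℝ} (hP : P ∈ rowStochastic ℝ S)
    (x : S → ℝ) : ∑ v, (x ᵥ* P) v = ∑ u, x u := by
  rw [← dotProduct_one, ← dotProduct_one, ← dotProduct_mulVec, hP.2]

lemma sum_abs_vecMul_le {P : Matrix S S ℝ} (hP : P ∈ rowStochastic ℝ S) (x : S → ℝ) :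
    ∑ v, |(x ᵥ* P) v| ≤ ∑ u, |x u| := by
  simpa using sum_abs_vecMul_le_of_sum_row_le (fun _ _ => nonneg_of_mem_rowStochastic hP)
    (fun u => (sum_row_of_mem_rowStochastic hP u).le) x

/-- Doeblin: on vectors of total mass zero, `x ᵥ* P = x ᵥ* (P - ε)`, and `P - ε` is nonnegative with
row sums `1 - ε |S| ≤ 1 - ε`. -/
lemma sum_abs_vecMul_le_of_le_apply [Nonempty S] {P : Matrix S S ℝ}
    (hP : P ∈ rowStochastic ℝ S) {ε : ℝ} (hε : 0 ≤ ε) (hPε : ∀ u v, ε ≤ P u v)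
    {x : S → ℝ} (hx : ∑ u, x u = 0) :
    ∑ v, |(x ᵥ* P) v| ≤ (1 - ε) * ∑ u, |x u| := by
  have hshift : x ᵥ* P = x ᵥ* (P - of fun _ _ => ε) := by
    ext v
    simp [vecMul, dotProduct, mul_sub, sum_sub_distrib, ← sum_mul, hx]
  have hcard : (1 : ℝ) ≤ Fintype.card S := by exact_mod_cast Fintype.card_pos
  rw [hshift]
  refine sum_abs_vecMul_le_of_sum_row_le (fun u v => sub_nonneg.2 (hPε u v)) (fun u => ?_) x
  simp only [sum_sub_distrib, sum_row_of_mem_rowStochastic hP u, sum_const,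
    card_univ, nsmul_eq_mul]
  nlinarith

end Contraction

section Pprod

variable {S : Type*} [Fintype S] [DecidableEq S] (P : ℕ → Matrix S S ℝ)

lemma Pprod_self (a : ℕ) : Pprod P a a = 1 := by simp [Pprod]

lemma Pprod_succ {a b : ℕ} (h : a ≤ b) : Pprod P a (b + 1) = Pprod P a b * P b := by
  simp [Pprod, Nat.succ_sub h, List.range_succ, Nat.add_sub_cancel' h]

lemma Pprod_mul {a b c : ℕ} (hab : a ≤ b) (hbc : b ≤ c) :
    Pprod P a b * Pprod P b c = Pprod P a c := by
  induction c, hbc using Nat.le_induction with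
  | base => rw [Pprod_self, mul_one]
  | succ c hbc ih => rw [Pprod_succ P hbc, ← mul_assoc, ih, Pprod_succ P (hab.trans hbc)]

lemma Pprod_add_eq_pow {a m : ℕ} {M : Matrix S S ℝ} (h : ∀ t < m, P (a + t) = M) :
    Pprod P a (a + m) = M ^ m := by
  rw [Pprod, Nat.add_sub_cancel_left, ← List.prod_replicate]
  congr 1
  exact List.eq_replicate_iff.2 (by simpa using h)

lemma Pprod_mem_rowStochastic (hP : ∀ t, P t ∈ rowStochastic ℝ S) (a b : ℕ) :
    Pprod P a b ∈ rowStochastic ℝ S :=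
  Submonoid.list_prod_mem _ (by simpa using fun t _ => hP _)

lemma Pprod_comp_div_eq_pow (f : ℕ → Matrix S S ℝ) {N : ℕ} (hN : 0 < N) (k : ℕ) :
    Pprod (fun t => f (t / N)) (N * k) (N * (k + 1)) = f k ^ N :=
  Pprod_add_eq_pow _ fun t ht => by
    simp only [Nat.mul_add_div hN, Nat.div_eq_of_lt ht, add_zero]

end Pprod

section WeakErgodicity

variable {S : Type*} [Fintype S] [DecidableEq S] {P : ℕ → Matrix S S ℝ}

lemma sum_abs_vecMul_Pprod_le_of_le (hP : ∀ t, P t ∈ rowStochastic ℝ S) (x : S → ℝ)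
    {a m m' : ℕ} (ham : a ≤ m) (hmm' : m ≤ m') :
    ∑ v, |(x ᵥ* Pprod P a m') v| ≤ ∑ v, |(x ᵥ* Pprod P a m) v| := by
  rw [← Pprod_mul P ham hmm', ← vecMul_vecMul]
  exact sum_abs_vecMul_le (Pprod_mem_rowStochastic P hP _ _) _

lemma sum_abs_vecMul_Pprod_le_exp [Nonempty S] (hP : ∀ t, P t ∈ rowStochastic ℝ S) {N : ℕ}
    {ε : ℕ → ℝ} (hε0 : ∀ k, 0 ≤ ε k) (hε : ∀ k u v, ε k ≤ Pprod P (N * k) (N * (k + 1)) u v)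
    {x : S → ℝ} (hx : ∑ u, x u = 0) {a k₀ k : ℕ} (ha : a ≤ N * k₀) (hk : k₀ ≤ k) :
    ∑ v, |(x ᵥ* Pprod P a (N * k)) v| ≤
      Real.exp (-∑ j ∈ Ico k₀ k, ε j) * ∑ v, |(x ᵥ* Pprod P a (N * k₀)) v| := by
  induction k, hk using Nat.le_induction with
  | base => simp
  | succ k hk ih =>
    have haN : a ≤ N * k := ha.trans (Nat.mul_le_mul_left N hk)
    have hmass : ∑ u, (x ᵥ* Pprod P a (N * k)) u = 0 := by
      rw [sum_vecMul_of_mem_rowStochastic (Pprod_mem_rowStochastic P hP _ _), hx]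
    calc ∑ v, |(x ᵥ* Pprod P a (N * (k + 1))) v|
        ≤ (1 - ε k) * ∑ v, |(x ᵥ* Pprod P a (N * k)) v| := by
          rw [← Pprod_mul P haN (Nat.mul_le_mul_left N k.le_succ), ← vecMul_vecMul]
          exact sum_abs_vecMul_le_of_le_apply (Pprod_mem_rowStochastic P hP _ _) (hε0 k) (hε k)
            hmass
      _ ≤ Real.exp (-ε k) *
          (Real.exp (-∑ j ∈ Ico k₀ k, ε j) * ∑ v, |(x ᵥ* Pprod P a (N * k₀)) v|) :=
          mul_le_mul (by linarith [Real.add_one_le_exp (-ε k)]) ih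
            (sum_nonneg fun _ _ => abs_nonneg _) (Real.exp_pos _).le
      _ = Real.exp (-∑ j ∈ Ico k₀ (k + 1), ε j) * ∑ v, |(x ᵥ* Pprod P a (N * k₀)) v| := by
          rw [sum_Ico_succ_top hk, neg_add, Real.exp_add]
          ring

theorem tendsto_sum_abs_vecMul_Pprod_zero [Nonempty S] (hP : ∀ t, P t ∈ rowStochastic ℝ S)
    {N : ℕ} (hN : 0 < N) {ε : ℕ → ℝ} (hε0 : ∀ k, 0 ≤ ε k)
    (hε : ∀ k u v, ε k ≤ Pprod P (N * k) (N * (k + 1)) u v) (hdiv : ¬Summable ε)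
    {x : S → ℝ} (hx : ∑ u, x u = 0) (a : ℕ) :
    Tendsto (fun m => ∑ v, |(x ᵥ* Pprod P a m) v|) atTop (𝓝 0) := by
  have hD0 : ∀ m, 0 ≤ ∑ v, |(x ᵥ* Pprod P a m) v| := fun m => sum_nonneg fun _ _ => abs_nonneg _
  have ha : a ≤ N * a := Nat.le_mul_of_pos_left a hN
  have hsum : Tendsto (fun k => ∑ j ∈ Ico a k, ε j) atTop atTop := by
    refine (tendsto_atTop_add_const_right _ (-∑ j ∈ range a, ε j)
      ((not_summable_iff_tendsto_nat_atTop_of_nonneg hε0).1 hdiv)).congr' ?_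
    filter_upwards [eventually_ge_atTop a] with k hk
    rw [sum_Ico_eq_sub _ hk, sub_eq_add_neg]
  have hblocks : Tendsto (fun k => ∑ v, |(x ᵥ* Pprod P a (N * k)) v|) atTop (𝓝 0) := by
    have hexp := (Real.tendsto_exp_atBot.comp (tendsto_neg_atTop_atBot.comp hsum)).mul_const
      (∑ v, |(x ᵥ* Pprod P a (N * a)) v|)
    rw [zero_mul] at hexp
    refine tendsto_of_tendsto_of_tendsto_of_le_of_le' tendsto_const_nhds hexp
      (Eventually.of_forall fun k => hD0 _) ?_
    filter_upwards [eventually_ge_atTop a] with k hk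
    exact sum_abs_vecMul_Pprod_le_exp hP hε0 hε hx ha hk
  refine tendsto_of_tendsto_of_tendsto_of_le_of_le' tendsto_const_nhds
    (hblocks.comp (Nat.tendsto_div_const_atTop hN.ne')) (Eventually.of_forall hD0) ?_
  filter_upwards [eventually_ge_atTop (N * a)] with m hm
  have hblock_start : a ≤ N * (m / N) :=
    ha.trans (Nat.mul_le_mul_left N ((Nat.le_div_iff_mul_le hN).2 (by linarith)))
  exact sum_abs_vecMul_Pprod_le_of_le hP x hblock_start (Nat.mul_div_le m N)

end WeakErgodicity

section Gibbs

variable {A : Type*} [Fintype A] [DecidableEq A]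

lemma filter_forall_ne_eq_image_update {ι : Type*} [Fintype ι] [DecidableEq ι] (u : ι → A)
    (i : ι) [DecidablePred fun v : ι → A => ∀ j, j ≠ i → v j = u j] :
    univ.filter (fun v : ι → A => ∀ j, j ≠ i → v j = u j) = univ.image (Function.update u i) := by
  ext v
  simp only [mem_filter, mem_univ, true_and, mem_image, Function.update_eq_iff, exists_eq_left]
  exact forall₂_congr fun j _ => eq_comm

lemma le_pow_card_apply_of_le_apply_update {ι : Type*} [Fintype ι] [DecidableEq ι]
    {M : Matrix (ι → A) (ι → A) ℝ} (hM : M ∈ rowStochastic ℝ (ι → A)) {δ : ℝ} (hδ : 0 ≤ δ)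
    (hMδ : ∀ u i b, δ ≤ M u (Function.update u i b)) (s : Finset ι) {u v : ι → A}
    (huv : ∀ j ∉ s, u j = v j) : δ ^ #s ≤ (M ^ #s) u v := by
  induction s using Finset.induction_on generalizing u with
  | empty =>
    obtain rfl : u = v := funext fun j => huv j (notMem_empty j)
    simp
  | insert i s hi ih =>
    set w := Function.update u i (v i)
    have hwv : ∀ j ∉ s, w j = v j := by
      intro j hj
      by_cases hji : j = i
      · simp [w, hji]
      · simp [w, hji, huv j (by simp [hji, hj])]
    rw [card_insert_of_notMem hi, pow_succ', pow_succ', mul_apply]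
    calc δ * δ ^ #s ≤ M u w * (M ^ #s) w v :=
          mul_le_mul (hMδ u i (v i)) (ih hwv) (pow_nonneg hδ _) (nonneg_of_mem_rowStochastic hM)
      _ ≤ ∑ w', M u w' * (M ^ #s) w' v :=
          single_le_sum (f := fun w' => M u w' * (M ^ #s) w' v)
            (fun w' _ => mul_nonneg (nonneg_of_mem_rowStochastic hM)
              (nonneg_of_mem_rowStochastic (pow_mem hM _)))
            (mem_univ w)

variable {n : ℕ} (E : (Fin n → A) → ℝ)

lemma abs_sub_le_energySpan (u : Fin n → A) (i : Fin n) (a b : A) :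
    |E (Function.update u i a) - E (Function.update u i b)| ≤ energySpan n E :=
  le_ciSup_of_le (Set.finite_range _).bddAbove (u, i, a, b) le_rfl

lemma energySpan_nonneg : 0 ≤ energySpan n E :=
  Real.iSup_nonneg fun _ => abs_nonneg _

variable [Nonempty A]

lemma gibbs_mem_rowStochastic (hn : 0 < n) (β : ℝ) : gibbs n E β ∈ rowStochastic ℝ _ := by
  refine mem_rowStochastic_iff_sum.2 ⟨fun u v => ?_, fun u => ?_⟩
  · exact div_nonneg (sum_nonneg fun i _ => by split_ifs <;> positivity) n.cast_nonneg
  · have hsite : ∀ i, ∑ v, (if ∀ j, j ≠ i → v j = u j then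
        Real.exp (-β * E v) / ∑ b, Real.exp (-β * E (Function.update u i b)) else 0) = 1 := by
      intro i
      rw [← sum_filter, filter_forall_ne_eq_image_update,
        sum_image fun b _ b' _ h => Function.update_injective u i h, ← sum_div,
        div_self (by positivity)]
    simp only [gibbs, ← sum_div]
    rw [sum_comm]
    simp only [hsite]
    simp [hn.ne']

lemma exp_neg_mul_energySpan_div_le_gibbs_apply_update {β : ℝ} (hβ : 0 ≤ β) (u : Fin n → A)
    (i : Fin n) (b : A) :
    Real.exp (-β * energySpan n E) / (n * Fintype.card A) ≤
      gibbs n E β u (Function.update u i b) := by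
  set v := Function.update u i b
  set Z := ∑ b', Real.exp (-β * E (Function.update u i b'))
  have hZ : Z ≤ Fintype.card A * (Real.exp (β * energySpan n E) * Real.exp (-β * E v)) :=
    calc Z ≤ ∑ _b' : A, Real.exp (β * energySpan n E) * Real.exp (-β * E v) :=
          sum_le_sum fun b' _ => by
            rw [← Real.exp_add, Real.exp_le_exp]
            have hspan := (abs_le.1 (abs_sub_le_energySpan E u i b b')).2
            nlinarith [mul_le_mul_of_nonneg_left hspan hβ]
      _ = _ := by simp
  have hsite : Real.exp (-β * E v) / Z ≤ ∑ i', if ∀ j, j ≠ i' → v j = u j then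
      Real.exp (-β * E v) / ∑ b', Real.exp (-β * E (Function.update u i' b')) else 0 := by
    refine le_of_eq_of_le ?_ (single_le_sum (fun i' _ => by split_ifs <;> positivity) (mem_univ i))
    rw [if_pos fun j hj => Function.update_of_ne hj b u]
  calc Real.exp (-β * energySpan n E) / (n * Fintype.card A)
      = Real.exp (-β * E v) / (Fintype.card A * (Real.exp (β * energySpan n E) *
          Real.exp (-β * E v))) / n := by
        rw [neg_mul β, Real.exp_neg]
        field_simp
    _ ≤ Real.exp (-β * E v) / Z / n := by gcongr
    _ ≤ gibbs n E β u v := div_le_div_of_nonneg_right hsite n.cast_nonneg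

lemma exp_neg_mul_energySpan_div_pow_le_gibbs_pow_apply (hn : 0 < n) {β : ℝ} (hβ : 0 ≤ β)
    (u v : Fin n → A) :
    (Real.exp (-β * energySpan n E) / (n * Fintype.card A)) ^ n ≤ (gibbs n E β ^ n) u v := by
  simpa using le_pow_card_apply_of_le_apply_update (gibbs_mem_rowStochastic E hn β)
    (by positivity) (exp_neg_mul_energySpan_div_le_gibbs_apply_update E hβ) univ (u := u)
    (v := v) (by simp)

end Gibbs

lemma not_summable_of_div_succ_le {ε : ℕ → ℝ} {C : ℝ} (hC : 0 < C)
    (hε : ∀ k : ℕ, C / (k + 1) ≤ ε k) : ¬Summable ε := fun hs => by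
  have hharm : ¬Summable fun k : ℕ => 1 / ((k : ℝ) + 1) :=
    (not_summable_iff_tendsto_nat_atTop_of_nonneg fun k => by positivity).2
      Real.tendsto_sum_range_one_div_nat_succ_atTop
  refine hharm ((((hs.of_nonneg_of_le fun k => by positivity) hε).mul_left C⁻¹).congr fun k => ?_)
  field_simp

lemma div_succ_le_exp_log_schedule_div_pow {Δ T a : ℝ} {n : ℕ} (ha : 0 < a) (hΔ : 0 ≤ Δ)
    (hT : n * Δ ≤ T) (k : ℕ) :
    (a ^ n)⁻¹ / (k + 1) ≤ (Real.exp (-(Real.log ((k + 1 : ℕ) : ℝ) / T) * Δ) / a) ^ n := by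
  set L := Real.log ((k + 1 : ℕ) : ℝ)
  have hrate : L / T * Δ * n ≤ L :=
    calc L / T * Δ * n = L * (n * Δ / T) := by ring
      _ ≤ L * 1 := mul_le_mul_of_nonneg_left
          (div_le_one_of_le₀ hT ((by positivity : (0 : ℝ) ≤ n * Δ).trans hT))
          (Real.log_natCast_nonneg _)
      _ = L := mul_one L
  have hexp : 1 / ((k : ℝ) + 1) ≤ Real.exp (-(L / T) * Δ) ^ n := by
    rw [← Real.exp_nat_mul, one_div, ← Real.exp_log (by positivity : (0 : ℝ) < k + 1),
      ← Real.exp_neg, Real.exp_le_exp]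
    have hL : L = Real.log ((k : ℝ) + 1) := by simp [L]
    linarith
  rw [div_pow]
  calc (a ^ n)⁻¹ / (k + 1) = 1 / ((k : ℝ) + 1) / a ^ n := by ring
    _ ≤ Real.exp (-(L / T) * Δ) ^ n / a ^ n := by gcongr

theorem gibbs_annealing_weaklyErgodic_general {A : Type*} [Fintype A] [DecidableEq A] [Nonempty A]
    (n : ℕ) (hn : 0 < n) (E : (Fin n → A) → ℝ)
    (c : ℝ) (hc : 1 < c) (T₀ : ℝ) (hT₀ : T₀ = c * n * energySpan n E) :
    ∀ μ ν : (Fin n → A) → ℝ, IsDist μ → IsDist ν → ∀ n1 : ℕ,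
      Tendsto (fun n2 =>
          l1 (Matrix.vecMul μ
                (Pprod (fun t => gibbs n E (Real.log ((t / n + 1 : ℕ) : ℝ) / T₀)) n1 n2))
             (Matrix.vecMul ν
                (Pprod (fun t => gibbs n E (Real.log ((t / n + 1 : ℕ) : ℝ) / T₀)) n1 n2)))
        atTop (nhds 0) := by
  intro μ ν hμ hν n1
  set Δ := energySpan n E
  set β : ℕ → ℝ := fun k => Real.log ((k + 1 : ℕ) : ℝ) / T₀
  have hΔ : 0 ≤ Δ := energySpan_nonneg E
  have hT : n * Δ ≤ T₀ := by rw [hT₀]; nlinarith [mul_nonneg n.cast_nonneg hΔ]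
  have hβ : ∀ k, 0 ≤ β k := fun k =>
    div_nonneg (Real.log_natCast_nonneg _) ((mul_nonneg n.cast_nonneg hΔ).trans hT)
  have hblock (k : ℕ) (u v : Fin n → A) : (Real.exp (-β k * Δ) / (n * Fintype.card A)) ^ n ≤
      Pprod (fun t => gibbs n E (β (t / n))) (n * k) (n * (k + 1)) u v := by
    rw [Pprod_comp_div_eq_pow (fun k => gibbs n E (β k)) hn]
    exact exp_neg_mul_energySpan_div_pow_le_gibbs_pow_apply E hn (hβ k) u v
  have hnA : (0 : ℝ) < n * Fintype.card A := by positivity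
  have hdiv := not_summable_of_div_succ_le (by positivity)
    (div_succ_le_exp_log_schedule_div_pow hnA hΔ hT)
  have hmass : ∑ u, (μ - ν) u = 0 := by simp [sum_sub_distrib, hμ.2, hν.2]
  refine (tendsto_sum_abs_vecMul_Pprod_zero (fun t => gibbs_mem_rowStochastic E hn _) hn
    (fun k => by positivity) hblock hdiv hmass n1).congr fun m => ?_
  simp only [l1, sub_vecMul, Pi.sub_apply]
  rfl

/-- Weak ergodicity of the simulated annealing Gibbs sampler with the cooling
schedule `β_t = ln(⌊t/n⌋ + 1)/T₀`, `T₀ = c·n·Δ`, `c > 1`. -/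
theorem gibbs_annealing_weaklyErgodic {A : Type*} [Fintype A] [DecidableEq A] [Nonempty A]
    (n : ℕ) (hn : 0 < n) (E : (Fin n → A) → ℝ) (hΔ : 0 < energySpan n E)
    (c : ℝ) (hc : 1 < c) (T₀ : ℝ) (hT₀ : T₀ = c * n * energySpan n E) :
    ∀ μ ν : (Fin n → A) → ℝ, IsDist μ → IsDist ν → ∀ n1 : ℕ,
      Tendsto (fun n2 =>
          l1 (Matrix.vecMul μ
                (Pprod (fun t => gibbs n E (Real.log ((t / n + 1 : ℕ) : ℝ) / T₀)) n1 n2))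
             (Matrix.vecMul ν
                (Pprod (fun t => gibbs n E (Real.log ((t / n + 1 : ℕ) : ℝ) / T₀)) n1 n2)))
        atTop (nhds 0) :=
  gibbs_annealing_weaklyErgodic_general n hn E c hc T₀ hT₀
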